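/- Under the right action of Röver's group V𝒢 on the vertex set 𝒫 given by [f]·g = [f ∘ g], the stabilizer of a vertex [f] of rank n is precisely the group f⁻¹ K_n f = {f⁻¹ ∘ k ∘ f : k ∈ K_n}; in particular it is finite of order n! · 4ⁿ. -/

import Mathlib

/-! Basic setup: the Cantor set `Δ = ℕ → Bool` and `C n = Fin n × Δ`,
the disjoint union of `n` copies of the Cantor set. -/

abbrev Δ : Type := ℕ → Bool
abbrev C (n : ℕ) : Type := Fin n × Δ

/-- A bijection between discrete spaces, as a homeomorphism. -/
def discHomeo {X Y : Type*} [TopologicalSpace X] [TopologicalSpace Y]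
    [DiscreteTopology X] [DiscreteTopology Y] (e : X ≃ Y) : X ≃ₜ Y :=
  ⟨e, continuous_of_discreteTopology, continuous_of_discreteTopology⟩

/-- The permutation homeomorphism `p_α : C n ≃ₜ C n`, permuting the copies
of the Cantor set according to `α`. -/
def permC {n : ℕ} (α : Equiv.Perm (Fin n)) : C n ≃ₜ C n :=
  (discHomeo α).prodCongr (Homeomorph.refl Δ)

/-- Cast between `C m` and `C n` when `m = n`. -/
def castC {m n : ℕ} (h : m = n) : C m ≃ₜ C n :=
  (discHomeo (finCongr h)).prodCongr (Homeomorph.refl Δ)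

/-- `C (m + n)` is the disjoint union of `C m` and `C n` (first `m` copies,
then the remaining `n` copies). -/
def toSum (m n : ℕ) : C (m + n) ≃ₜ (C m) ⊕ (C n) :=
  ((discHomeo finSumFinEquiv.symm).prodCongr (Homeomorph.refl Δ)).trans
    (Homeomorph.sumProdDistrib)

/-- The direct sum `f ⊕ g` of homeomorphisms, acting as `f` on the first `m`
copies (sent to the first `m'` copies) and as `g` on the last `n` copies. -/
def dsum {m m' n n' : ℕ} (f : C m ≃ₜ C m') (g : C n ≃ₜ C n') :
    C (m + n) ≃ₜ C (m' + n') :=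
  ((toSum m n).trans (f.sumCongr g)).trans (toSum m' n').symm

/-- The split homeomorphism `x : C 1 ≃ₜ C 2`: a sequence starting with letter
`i` is sent to the `(i+1)`-st copy of the Cantor set, deleting the first letter. -/
def split : C 1 ≃ₜ C 2 where
  toFun p := (finTwoEquiv.symm (p.2 0), fun k => p.2 (k + 1))
  invFun p := (0, fun k => Nat.casesOn k (finTwoEquiv p.1) (fun j => p.2 j))
  left_inv := by
    rintro ⟨i, w⟩
    refine Prod.ext (Subsingleton.elim _ _) ?_
    funext k
    cases k <;> simp
  right_inv := by
    rintro ⟨i, w⟩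
    refine Prod.ext ?_ rfl
    simp
  continuous_toFun := by
    refine Continuous.prodMk ?_ ?_
    · exact Continuous.comp continuous_of_discreteTopology
        ((continuous_apply 0).comp continuous_snd)
    · exact continuous_pi fun k => (continuous_apply (k + 1)).comp continuous_snd
  continuous_invFun := by
    refine Continuous.prodMk continuous_const ?_
    refine continuous_pi fun k => ?_
    cases k with
    | zero => exact Continuous.comp continuous_of_discreteTopology continuous_fst
    | succ j => exact (continuous_apply j).comp continuous_snd

/-- The split homeomorphism `x_i^{(n)} = id_{i-1} ⊕ x ⊕ id_{n-i} : C n ≃ₜ C (n+1)`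
(with `i` zero-indexed, so `i : Fin n` splits the `(i+1)`-st copy). -/
def splitAt {n : ℕ} (i : Fin n) : C n ≃ₜ C (n + 1) :=
  ((castC (show n = (i : ℕ) + 1 + (n - 1 - i) by have := i.isLt; omega)).trans
    (dsum (dsum (Homeomorph.refl (C i)) split) (Homeomorph.refl (C (n - 1 - i))))).trans
    (castC (show (i : ℕ) + 2 + (n - 1 - i) = n + 1 by have := i.isLt; omega))

/-- `IsForest f` says that `f : C m ≃ₜ C n` is a binary forest, i.e. a
(possibly empty) composition of split homeomorphisms.  A binary tree is a
binary forest with domain `C 1`. -/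
inductive IsForest : ∀ {m n : ℕ}, (C m ≃ₜ C n) → Prop where
  | refl (m : ℕ) : IsForest (Homeomorph.refl (C m))
  | step {m n : ℕ} {f : C m ≃ₜ C n} (i : Fin n) (hf : IsForest f) :
      IsForest (f.trans (splitAt i))

/-! The Grigorchuk generators `σ, b, c, d`, defined via the Grigorchuk automaton:
on binary sequences, `σ` flips the first letter, and `b(0w)=0σ(w)`, `b(1w)=1c(w)`,
`c(0w)=0σ(w)`, `c(1w)=1d(w)`, `d(0w)=0w`, `d(1w)=1b(w)`. -/

/-- States of the Grigorchuk automaton: the identity, `σ`, `b`, `c`, `d`. -/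
inductive GS : Type | e | s | b | c | d
deriving DecidableEq

instance : Fintype GS :=
  ⟨{.e, .s, .b, .c, .d}, by intro x; cases x <;> decide⟩

instance : TopologicalSpace GS := ⊥
instance : DiscreteTopology GS := ⟨rfl⟩

/-- Output function of the Grigorchuk automaton. -/
def GS.out : GS → Bool → Bool
  | .s, i => !i
  | _,  i => i

/-- Transition function of the Grigorchuk automaton. -/
def GS.step : GS → Bool → GS
  | .e, _ => .e
  | .s, _ => .e
  | .b, false => .s
  | .b, true  => .c
  | .c, false => .s
  | .c, true  => .d
  | .d, false => .e
  | .d, true  => .b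

/-- The state of the automaton started in state `g` after reading `w 0, …, w (n-1)`. -/
def GS.stArr (g : GS) (w : Δ) : ℕ → GS
  | 0 => g
  | n + 1 => (GS.stArr g w n).step (w n)

/-- The action of the automaton state `g` on infinite binary sequences. -/
def GS.act (g : GS) (w : Δ) : Δ := fun n => (GS.stArr g w n).out (w n)

lemma GS.out_out : ∀ (g : GS) (i : Bool), g.out (g.out i) = i := by decide

lemma GS.step_out : ∀ (g : GS) (i : Bool), g.step (g.out i) = g.step i := by decide

lemma GS.stArr_act (g : GS) (w : Δ) : ∀ n, GS.stArr g (GS.act g w) n = GS.stArr g w n := by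
  intro n
  induction n with
  | zero => rfl
  | succ n ih => rw [GS.stArr, GS.stArr, ih, GS.act, GS.step_out]

lemma GS.act_act (g : GS) (w : Δ) : GS.act g (GS.act g w) = w := by
  funext n
  rw [GS.act, GS.stArr_act, GS.act, GS.out_out]

lemma GS.continuous_stArr (g : GS) (n : ℕ) : Continuous (fun w : Δ => GS.stArr g w n) := by
  induction n with
  | zero => exact continuous_const
  | succ n ih =>
      exact Continuous.comp (f := fun w : Δ => ((GS.stArr g w n), w n))
        (g := fun p : GS × Bool => p.1.step p.2)
        continuous_of_discreteTopology (ih.prodMk (continuous_apply n))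

lemma GS.continuous_act (g : GS) : Continuous (GS.act g) := by
  refine continuous_pi fun n => ?_
  exact Continuous.comp (f := fun w : Δ => ((GS.stArr g w n), w n))
    (g := fun p : GS × Bool => p.1.out p.2)
    continuous_of_discreteTopology ((GS.continuous_stArr g n).prodMk (continuous_apply n))

/-- The homeomorphism of the Cantor set determined by an automaton state. -/
def GS.homeo (g : GS) : Δ ≃ₜ Δ where
  toFun := GS.act g
  invFun := GS.act g
  left_inv := GS.act_act g
  right_inv := GS.act_act g
  continuous_toFun := GS.continuous_act g
  continuous_invFun := GS.continuous_act g

/-- Lift a homeomorphism of the Cantor set to `C 1`. -/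
def liftC1 (h : Δ ≃ₜ Δ) : C 1 ≃ₜ C 1 := (Homeomorph.refl (Fin 1)).prodCongr h

/-- The Grigorchuk generator `σ` (flips the first letter). -/
def gσ : C 1 ≃ₜ C 1 := liftC1 (GS.homeo .s)
/-- The Grigorchuk generator `b`. -/
def gb : C 1 ≃ₜ C 1 := liftC1 (GS.homeo .b)
/-- The Grigorchuk generator `c`. -/
def gc : C 1 ≃ₜ C 1 := liftC1 (GS.homeo .c)
/-- The Grigorchuk generator `d`. -/
def gd : C 1 ≃ₜ C 1 := liftC1 (GS.homeo .d)

/-- The group of self-homeomorphisms of `C n`, with `(f * g) x = f (g x)`. -/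
instance homeoGroup (n : ℕ) : Group (C n ≃ₜ C n) where
  mul f g := g.trans f
  one := Homeomorph.refl _
  inv := Homeomorph.symm
  mul_assoc a b c := rfl
  one_mul a := rfl
  mul_one a := rfl
  inv_mul_cancel a := Homeomorph.self_trans_symm a

/-- The first Grigorchuk group `𝒢 = ⟨σ, b, c, d⟩`. -/
def Grig : Subgroup (C 1 ≃ₜ C 1) :=
  Subgroup.closure {gσ, gb, gc, gd}

/-- The set `K = {1, b, c, d}` of homeomorphisms of `C 1`. -/
def Kset : Set (C 1 ≃ₜ C 1) := {Homeomorph.refl (C 1), gb, gc, gd}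

/-- The `n`-fold direct sum `k₁ ⊕ ⋯ ⊕ k_n` of homeomorphisms of `C 1`. -/
def dsumFam : {n : ℕ} → (Fin n → (C 1 ≃ₜ C 1)) → (C n ≃ₜ C n)
  | 0, _ => Homeomorph.refl _
  | n + 1, k => dsum (dsumFam (fun i : Fin n => k i.castSucc)) (k (Fin.last n))

/-- The direct sum `h₁ ⊕ ⋯ ⊕ h_n` of a family of homeomorphisms
`h i : C 1 ≃ₜ C (m i)`. -/
def dsumFamH : {n : ℕ} → {m : Fin n → ℕ} → (∀ i, C 1 ≃ₜ C (m i)) →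
    (C n ≃ₜ C (∑ i, m i))
  | 0, _, _ => castC (by simp)
  | n + 1, m, h =>
      (dsum (dsumFamH (fun i : Fin n => h i.castSucc)) (h (Fin.last n))).trans
        (castC (Fin.sum_univ_castSucc m).symm)

/-- The group `K_n = {p_α ∘ (k₁ ⊕ ⋯ ⊕ k_n) : α ∈ S_n, kᵢ ∈ K}`. -/
def Kn (n : ℕ) : Set (C n ≃ₜ C n) :=
  {h | ∃ (α : Equiv.Perm (Fin n)) (k : Fin n → (C 1 ≃ₜ C 1)),
    (∀ i, k i ∈ Kset) ∧ h = (dsumFam k).trans (permC α)}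

/-- `σ_j : C m ≃ₜ C m`, acting as `σ` on the `(j+1)`-st copy (zero-indexed `j`)
of the Cantor set and as the identity elsewhere. -/
def sigmaAt {m : ℕ} (j : Fin m) : C m ≃ₜ C m :=
  dsumFam (fun i => if i = j then gσ else Homeomorph.refl (C 1))

/-- Membership in the groupoid `𝔙` generated by all split homeomorphisms and
all permutation homeomorphisms. -/
inductive InV : ∀ {m n : ℕ}, (C m ≃ₜ C n) → Prop where
  | split {n : ℕ} (i : Fin n) : InV (splitAt i)
  | perm {n : ℕ} (α : Equiv.Perm (Fin n)) : InV (permC α)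
  | comp {m n p : ℕ} {f : C m ≃ₜ C n} {g : C n ≃ₜ C p} :
      InV f → InV g → InV (f.trans g)
  | inv {m n : ℕ} {f : C m ≃ₜ C n} : InV f → InV f.symm

/-- Membership in Röver's groupoid `𝔙𝒢`, generated by `𝔙` together with the
elements of the Grigorchuk group `𝒢`. -/
inductive InVG : ∀ {m n : ℕ}, (C m ≃ₜ C n) → Prop where
  | split {n : ℕ} (i : Fin n) : InVG (splitAt i)
  | perm {n : ℕ} (α : Equiv.Perm (Fin n)) : InVG (permC α)
  | grig {g : C 1 ≃ₜ C 1} : g ∈ Grig → InVG g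
  | comp {m n p : ℕ} {f : C m ≃ₜ C n} {g : C n ≃ₜ C p} :
      InVG f → InVG g → InVG (f.trans g)
  | inv {m n : ℕ} {f : C m ≃ₜ C n} : InVG f → InVG f.symm

/-- The coset `[f] = K_n f = {k ∘ f : k ∈ K_n}` of `f : C 1 ≃ₜ C n`. -/
def coset {n : ℕ} (f : C 1 ≃ₜ C n) : Set (C 1 ≃ₜ C n) :=
  {h | ∃ k ∈ Kn n, h = f.trans k}

/-- The ambient type for vertices of the poset `𝒫`: a rank `n` together with
a set of homeomorphisms `C 1 ≃ₜ C n`. -/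
def PP : Type := Σ n : ℕ, Set (C 1 ≃ₜ C n)

/-- A member of `PP` is a vertex of `𝒫` if it is the coset `[f] = K_n f` of
some `f : C 1 ≃ₜ C n` in Röver's groupoid. -/
def IsVert (v : PP) : Prop :=
  ∃ f : C 1 ≃ₜ C v.1, InVG f ∧ v.2 = coset f

/-- `w` is a splitting of `v` if `v = [f]` and `w = [x_i ∘ f]` for some
representative `f` and some index `i`. -/
def SplittingOf (v w : PP) : Prop :=
  ∃ (n : ℕ) (f : C 1 ≃ₜ C n) (i : Fin n), InVG f ∧
    v = ⟨n, coset f⟩ ∧ w = ⟨n + 1, coset (f.trans (splitAt i))⟩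

/-- `w` is an expansion of `v` (written `v ≤ w`): `w` is obtained from `v` by
a finite (possibly empty) sequence of splittings. -/
def Expansion : PP → PP → Prop := Relation.ReflTransGen SplittingOf

/-- The four possible elementary pieces `1, x, σ₁ ∘ x, x₁ ∘ x` (with their
ranks), used to define elementary expansions. -/
def elemSet : Set (Σ m : ℕ, (C 1 ≃ₜ C m)) :=
  {⟨1, Homeomorph.refl (C 1)⟩, ⟨2, split⟩,
   ⟨2, split.trans (sigmaAt (0 : Fin 2))⟩,
   ⟨3, split.trans (splitAt (0 : Fin 2))⟩}

/-- `w` is an elementary expansion of `v`: `v = [f]` and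
`w = [(u₁ ⊕ ⋯ ⊕ u_n) ∘ f]` where each `uᵢ ∈ {1, x, σ₁∘x, x₁∘x}`. -/
def ElemExp (v w : PP) : Prop :=
  ∃ (n : ℕ) (f : C 1 ≃ₜ C n) (m : Fin n → ℕ) (h : ∀ i, C 1 ≃ₜ C (m i)),
    InVG f ∧ (∀ i, (⟨m i, h i⟩ : Σ m : ℕ, (C 1 ≃ₜ C m)) ∈ elemSet) ∧
    v = ⟨n, coset f⟩ ∧ w = ⟨∑ i, m i, coset (f.trans (dsumFamH h))⟩

/-!
If `g ∘ f = k ∘ f` with `k ∈ K_n` then `g = f⁻¹ k f`. Conversely every `f⁻¹ k f` fixes `[f]`,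
because `K_n` is a group (`K` is the Klein four-group), and lies in `V𝒢`, because `K_n ⊆ 𝔙𝒢`.
For the latter it suffices to have each of `b, c, d` acting on a single copy of `C(n)`. Splitting
that copy conjugates `g` into `g|₀ ⊕ g|₁`, which is `1 ⊕ b`, `σ ⊕ c`, `σ ⊕ d` for `g = d, b, c`,
and `σ` on one copy is conjugate under a split to a transposition of copies; so `b, c, d` on one
copy of `C(n + 1)` come from `d, b, c` on one copy of `C(n)`, starting from `𝒢` for `n = 1`.
The count holds because `(α, k) ↦ p_α ∘ (k₁ ⊕ ⋯ ⊕ k_n)` is injective on `S_n × Kⁿ` and `|K| = 4`.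
-/

namespace GS

lemma stArr_e (w : Δ) : ∀ n, stArr .e w n = .e
  | 0 => rfl
  | n + 1 => by rw [stArr, stArr_e w n]; rfl

lemma act_e (w : Δ) : act .e w = w := by
  funext n
  rw [act, stArr_e]
  rfl

lemma act_apply_zero (g : GS) (w : Δ) : act g w 0 = g.out (w 0) := rfl

lemma out_of_ne_s {g : GS} (hg : g ≠ .s) (i : Bool) : g.out i = i := by
  cases g <;> first | rfl | exact absurd rfl hg

lemma stArr_succ (g : GS) (w : Δ) :
    ∀ n, stArr g w (n + 1) = stArr (g.step (w 0)) (fun k => w (k + 1)) n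
  | 0 => rfl
  | n + 1 => by rw [stArr, stArr_succ g w n]; rfl

lemma act_tail (g : GS) (w : Δ) :
    (fun k => act g w (k + 1)) = act (g.step (w 0)) (fun k => w (k + 1)) := by
  funext k
  rw [act, act, stArr_succ]

/-- Triples `(p, q, r)` with `p ∘ q = r`. The list is closed under reading a letter, which is
what proves `act p ∘ act q = act r` for its members. -/
def CompTriple (p q r : GS) : Prop :=
  (p, q, r) ∈ ([(.b, .b, .e), (.b, .c, .d), (.b, .d, .c), (.b, .e, .b),
    (.c, .b, .d), (.c, .c, .e), (.c, .d, .b), (.c, .e, .c),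
    (.d, .b, .c), (.d, .c, .b), (.d, .d, .e), (.d, .e, .d),
    (.e, .b, .b), (.e, .c, .c), (.e, .d, .d), (.e, .e, .e),
    (.e, .s, .s), (.s, .e, .s), (.s, .s, .e)] : List (GS × GS × GS))

instance (p q r : GS) : Decidable (CompTriple p q r) :=
  inferInstanceAs (Decidable (_ ∈ _))

lemma CompTriple.out_out :
    ∀ p q r : GS, CompTriple p q r → ∀ i, p.out (q.out i) = r.out i := by
  decide

lemma CompTriple.step_step : ∀ p q r : GS, CompTriple p q r →
    ∀ i, CompTriple (p.step (q.out i)) (q.step i) (r.step i) := by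
  decide

lemma compTriple_stArr {p q r : GS} (h : CompTriple p q r) (w : Δ) :
    ∀ n, CompTriple (stArr p (act q w) n) (stArr q w n) (stArr r w n)
  | 0 => h
  | n + 1 => CompTriple.step_step _ _ _ (compTriple_stArr h w n) (w n)

lemma CompTriple.act_act {p q r : GS} (h : CompTriple p q r) (w : Δ) :
    act p (act q w) = act r w := by
  funext n
  exact CompTriple.out_out _ _ _ (compTriple_stArr h w n) (w n)

/-- Multiplication of the Klein four-group `{e, b, c, d}` (meaningless on `s`). -/
def kleinMul : GS → GS → GS
  | .e, q => q
  | p, .e => p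
  | .b, .c | .c, .b => .d
  | .b, .d | .d, .b => .c
  | .c, .d | .d, .c => .b
  | _, _ => .e

lemma compTriple_kleinMul : ∀ p q : GS, p ≠ .s → q ≠ .s →
    CompTriple p q (kleinMul p q) ∧ kleinMul p q ≠ .s := by
  decide

lemma compTriple_self : ∀ p : GS, p ≠ .s → CompTriple p p .e := by
  decide

lemma eq_of_act_eq : ∀ g g' : GS, g ≠ .s → g' ≠ .s →
    g.act (fun _ => false) 1 = g'.act (fun _ => false) 1 →
    g.act (fun k => decide (k = 0)) 2 = g'.act (fun k => decide (k = 0)) 2 → g = g' := by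
  decide

lemma card_subtype_ne_s : Nat.card {g : GS // g ≠ .s} = 4 := by
  rw [Nat.card_eq_fintype_card]
  rfl

end GS

def act1 (h : C 1 ≃ₜ C 1) (w : Δ) : Δ := (h (0, w)).2

lemma apply_eq_act1 (h : C 1 ≃ₜ C 1) (i : Fin 1) (w : Δ) : h (i, w) = (i, act1 h w) := by
  obtain rfl : i = 0 := Subsingleton.elim _ _
  exact Prod.ext (Subsingleton.elim _ _) rfl

@[simp]
lemma act1_one (w : Δ) : act1 1 w = w := rfl

@[simp]
lemma act1_mul (a b : C 1 ≃ₜ C 1) (w : Δ) : act1 (a * b) w = act1 a (act1 b w) := by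
  rw [act1, Homeomorph.mul_apply, apply_eq_act1 b]
  rfl

lemma ext_act1 {a b : C 1 ≃ₜ C 1} (h : ∀ w, act1 a w = act1 b w) : a = b := by
  ext ⟨i, w⟩ : 1
  rw [apply_eq_act1, apply_eq_act1, h]

def GS.toC1 (g : GS) : C 1 ≃ₜ C 1 := liftC1 (GS.homeo g)

@[simp]
lemma act1_toC1 (g : GS) (w : Δ) : act1 g.toC1 w = g.act w := rfl

lemma GS.toC1_e : GS.e.toC1 = 1 :=
  ext_act1 fun w => GS.act_e w

lemma GS.CompTriple.toC1_mul {p q r : GS} (h : CompTriple p q r) :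
    p.toC1 * q.toC1 = r.toC1 :=
  ext_act1 fun w => by simp only [act1_mul, act1_toC1, h.act_act]

lemma GS.toC1_injOn {g g' : GS} (hg : g ≠ .s) (hg' : g' ≠ .s) (h : g.toC1 = g'.toC1) :
    g = g' :=
  GS.eq_of_act_eq g g' hg hg' (congrArg (fun k => act1 k _ 1) h)
    (congrArg (fun k => act1 k _ 2) h)

lemma mem_Kset_iff {k : C 1 ≃ₜ C 1} : k ∈ Kset ↔ ∃ g : GS, g ≠ .s ∧ g.toC1 = k := by
  constructor
  · rintro (rfl | rfl | rfl | rfl)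
    exacts [⟨.e, by decide, GS.toC1_e⟩, ⟨.b, by decide, rfl⟩, ⟨.c, by decide, rfl⟩,
      ⟨.d, by decide, rfl⟩]
  · rintro ⟨g, hg, rfl⟩
    cases g
    exacts [.inl GS.toC1_e, absurd rfl hg, .inr (.inl rfl), .inr (.inr (.inl rfl)),
      .inr (.inr (.inr rfl))]

def kleinFour : Subgroup (C 1 ≃ₜ C 1) where
  carrier := Kset
  one_mem' := .inl rfl
  mul_mem' {k k'} hk hk' := by
    obtain ⟨g, hg, rfl⟩ := mem_Kset_iff.1 hk
    obtain ⟨g', hg', rfl⟩ := mem_Kset_iff.1 hk'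
    obtain ⟨hprod, hs⟩ := GS.compTriple_kleinMul g g' hg hg'
    exact mem_Kset_iff.2 ⟨_, hs, hprod.toC1_mul.symm⟩
  inv_mem' {k} hk := by
    obtain ⟨g, hg, rfl⟩ := mem_Kset_iff.1 hk
    rwa [inv_eq_of_mul_eq_one_right ((GS.compTriple_self g hg).toC1_mul.trans GS.toC1_e)]

@[simp]
lemma permC_apply {n : ℕ} (α : Equiv.Perm (Fin n)) (i : Fin n) (w : Δ) :
    permC α (i, w) = (α i, w) := rfl

@[simp]
lemma castC_apply {m n : ℕ} (h : m = n) (i : Fin m) (w : Δ) :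
    castC h (i, w) = (Fin.cast h i, w) := rfl

lemma toSum_castAdd (m n : ℕ) (i : Fin m) (w : Δ) :
    toSum m n (Fin.castAdd n i, w) = .inl (i, w) := by
  change Homeomorph.sumProdDistrib (finSumFinEquiv.symm (Fin.castAdd n i), w) = _
  rw [finSumFinEquiv_symm_apply_castAdd]
  rfl

lemma toSum_natAdd (m n : ℕ) (i : Fin n) (w : Δ) :
    toSum m n (Fin.natAdd m i, w) = .inr (i, w) := by
  change Homeomorph.sumProdDistrib (finSumFinEquiv.symm (Fin.natAdd m i), w) = _
  rw [finSumFinEquiv_symm_apply_natAdd]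
  rfl

lemma dsum_apply_castAdd {m m' n n' : ℕ} (f : C m ≃ₜ C m') (g : C n ≃ₜ C n')
    (i : Fin m) (w : Δ) :
    dsum f g (Fin.castAdd n i, w) = (Fin.castAdd n' (f (i, w)).1, (f (i, w)).2) := by
  rw [dsum, Homeomorph.trans_apply, Homeomorph.trans_apply, toSum_castAdd,
    Homeomorph.symm_apply_eq, toSum_castAdd]
  rfl

lemma dsum_apply_natAdd {m m' n n' : ℕ} (f : C m ≃ₜ C m') (g : C n ≃ₜ C n')
    (i : Fin n) (w : Δ) :
    dsum f g (Fin.natAdd m i, w) = (Fin.natAdd m' (g (i, w)).1, (g (i, w)).2) := by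
  rw [dsum, Homeomorph.trans_apply, Homeomorph.trans_apply, toSum_natAdd,
    Homeomorph.symm_apply_eq, toSum_natAdd]
  rfl

lemma splitAt_apply_of_lt {n : ℕ} {j i : Fin n} (h : i < j) (w : Δ) :
    splitAt j (i, w) = (i.castSucc, w) := by
  have hi : Fin.cast (by have := j.isLt; omega) i
      = Fin.castAdd (n - 1 - j) (Fin.castAdd 1 (⟨i, h⟩ : Fin j)) := rfl
  simp only [splitAt, Homeomorph.trans_apply, castC_apply, hi, dsum_apply_castAdd]
  rfl

lemma splitAt_apply_self {n : ℕ} (j : Fin n) (w : Δ) :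
    splitAt j (j, w) = (if w 0 then j.succ else j.castSucc, fun k => w (k + 1)) := by
  have hj : Fin.cast (by have := j.isLt; omega) j
      = Fin.castAdd (n - 1 - j) (Fin.natAdd j (0 : Fin 1)) := rfl
  simp only [splitAt, Homeomorph.trans_apply, castC_apply, hj, dsum_apply_castAdd,
    dsum_apply_natAdd]
  refine Prod.ext (Fin.ext ?_) rfl
  cases hw : w 0 <;> simp [split, hw] <;> rfl

lemma splitAt_apply_of_gt {n : ℕ} {j i : Fin n} (h : j < i) (w : Δ) :
    splitAt j (i, w) = (i.succ, w) := by
  have hi : Fin.cast (by have := j.isLt; omega) i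
      = Fin.natAdd (j + 1) (⟨i - (j + 1), by omega⟩ : Fin (n - 1 - j)) := by
    ext; simp; omega
  simp only [splitAt, Homeomorph.trans_apply, castC_apply, hi, dsum_apply_natAdd]
  ext <;> simp; omega

lemma dsumFam_apply {n : ℕ} (k : Fin n → (C 1 ≃ₜ C 1)) (i : Fin n) (w : Δ) :
    dsumFam k (i, w) = (i, act1 (k i) w) := by
  induction n with
  | zero => exact i.elim0
  | succ n ih =>
    cases i using Fin.lastCases with
    | last =>
      rw [dsumFam, show Fin.last n = Fin.natAdd n (0 : Fin 1) from rfl, dsum_apply_natAdd,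
        apply_eq_act1]
    | cast i =>
      rw [dsumFam, Fin.castSucc, dsum_apply_castAdd, ih]

def dsumHom (n : ℕ) : (Fin n → (C 1 ≃ₜ C 1)) →* (C n ≃ₜ C n) where
  toFun := dsumFam
  map_one' := by
    ext ⟨i, w⟩ : 1
    simp [dsumFam_apply]
  map_mul' k k' := by
    ext ⟨i, w⟩ : 1
    simp [dsumFam_apply]

lemma mem_Kn_iff {n : ℕ} {h : C n ≃ₜ C n} :
    h ∈ Kn n ↔ ∃ (α : Equiv.Perm (Fin n)) (k : Fin n → (C 1 ≃ₜ C 1)),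
      (∀ i, k i ∈ kleinFour) ∧ h = permC α * dsumFam k := Iff.rfl

def knSubgroup (n : ℕ) : Subgroup (C n ≃ₜ C n) where
  carrier := Kn n
  one_mem' := ⟨1, 1, fun _ => kleinFour.one_mem, (map_one (dsumHom n)).symm⟩
  mul_mem' {h h'} hh hh' := by
    obtain ⟨α, k, hk, rfl⟩ := mem_Kn_iff.1 hh
    obtain ⟨α', k', hk', rfl⟩ := mem_Kn_iff.1 hh'
    refine mem_Kn_iff.2 ⟨α * α', fun i => k (α' i) * k' i,
      fun i => kleinFour.mul_mem (hk _) (hk' i), ?_⟩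
    ext ⟨i, w⟩ : 1
    simp [dsumFam_apply]
  inv_mem' {h} hh := by
    obtain ⟨α, k, hk, rfl⟩ := mem_Kn_iff.1 hh
    refine mem_Kn_iff.2 ⟨α⁻¹, fun i => (k (α⁻¹ i))⁻¹, fun i => kleinFour.inv_mem (hk _), ?_⟩
    refine inv_eq_of_mul_eq_one_right ?_
    ext ⟨i, w⟩ : 1
    simp [dsumFam_apply, ← act1_mul]

def atPos {n : ℕ} (j : Fin n) (k : C 1 ≃ₜ C 1) : C n ≃ₜ C n := dsumFam (Pi.mulSingle j k)

lemma atPos_apply {n : ℕ} (j : Fin n) (k : C 1 ≃ₜ C 1) (i : Fin n) (w : Δ) :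
    atPos j k (i, w) = (i, if i = j then act1 k w else w) := by
  rw [atPos, dsumFam_apply, Pi.mulSingle_apply]
  split_ifs <;> rfl

lemma atPos_one {n : ℕ} (j : Fin n) : atPos j 1 = 1 := by
  rw [atPos, Pi.mulSingle_one]
  exact map_one (dsumHom n)

lemma atPos_fin_one (j : Fin 1) (k : C 1 ≃ₜ C 1) : atPos j k = k := by
  ext ⟨i, w⟩ : 1
  rw [atPos_apply, if_pos (Subsingleton.elim _ _), apply_eq_act1]

lemma atPos_trans_permC {n : ℕ} (i : Fin n) (k : C 1 ≃ₜ C 1) (α : Equiv.Perm (Fin n)) :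
    (atPos i k).trans (permC α) = (permC α).trans (atPos (α i) k) := by
  ext ⟨i', w⟩ : 1
  simp [atPos_apply]

lemma atPos_s_trans_splitAt {n : ℕ} (j : Fin n) :
    (atPos j GS.s.toC1).trans (splitAt j)
      = (splitAt j).trans (permC (Equiv.swap j.castSucc j.succ)) := by
  ext ⟨i, w⟩ : 1
  simp only [Homeomorph.trans_apply, atPos_apply]
  rcases lt_trichotomy i j with h | rfl | h
  · rw [if_neg h.ne, splitAt_apply_of_lt h, permC_apply, Equiv.swap_apply_of_ne_of_ne]
    · simpa using h.ne
    · simp [Fin.ext_iff]; omega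
  · simp only [if_true, splitAt_apply_self, act1_toC1, GS.act_apply_zero, GS.act_tail]
    rcases Bool.eq_false_or_eq_true (w 0) with hw | hw <;> simp [hw, GS.out, GS.step, GS.act_e]
  · rw [if_neg h.ne', splitAt_apply_of_gt h, permC_apply, Equiv.swap_apply_of_ne_of_ne]
    · simp [Fin.ext_iff]; omega
    · simpa using h.ne'

lemma atPos_trans_splitAt {n : ℕ} (j : Fin n) {g : GS} (hg : g ≠ .s) :
    (atPos j g.toC1).trans (splitAt j)
      = (splitAt j).trans
          (atPos j.castSucc (g.step false).toC1 * atPos j.succ (g.step true).toC1) := by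
  ext ⟨i, w⟩ : 1
  simp only [Homeomorph.trans_apply, Homeomorph.mul_apply, atPos_apply]
  rcases lt_trichotomy i j with h | rfl | h
  · have h₁ : i.castSucc ≠ j.succ := by simp [Fin.ext_iff]; omega
    simp [h.ne, h₁, splitAt_apply_of_lt h, atPos_apply]
  · simp only [if_true, splitAt_apply_self, act1_toC1, GS.act_apply_zero, GS.out_of_ne_s hg,
      GS.act_tail]
    rcases Bool.eq_false_or_eq_true (w 0) with hw | hw <;> simp [hw, atPos_apply, Fin.ext_iff]
  · have h₁ : i.succ ≠ j.castSucc := by simp [Fin.ext_iff]; omega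
    simp [h.ne', h₁, splitAt_apply_of_gt h, atPos_apply]

def vgSubgroup (n : ℕ) : Subgroup (C n ≃ₜ C n) where
  carrier := {g | InVG g}
  one_mem' := InVG.perm (1 : Equiv.Perm (Fin n))
  mul_mem' ha hb := InVG.comp hb ha
  inv_mem' ha := InVG.inv ha

lemma InVG.iff_of_trans_eq {m m' : ℕ} {S : C m ≃ₜ C m'} (hS : InVG S) {A : C m ≃ₜ C m}
    {B : C m' ≃ₜ C m'} (h : A.trans S = S.trans B) : InVG A ↔ InVG B := by
  have hA : A = (S.trans B).trans S.symm := by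
    ext x : 1
    simp [← h]
  have hB : B = (S.symm.trans A).trans S := by
    ext x : 1
    simpa using (DFunLike.congr_fun h (S.symm x)).symm
  exact ⟨fun hA' => hB ▸ (hS.inv.comp hA').comp hS, fun hB' => hA ▸ (hS.comp hB').comp hS.inv⟩

lemma InVG.atPos_s {n : ℕ} (j : Fin n) : InVG (atPos j GS.s.toC1) :=
  (InVG.iff_of_trans_eq (.split j) (atPos_s_trans_splitAt j)).2 (.perm _)

lemma InVG.atPos_of_atPos {n : ℕ} {i : Fin n} {k : C 1 ≃ₜ C 1} (h : InVG (atPos i k))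
    (j : Fin n) : InVG (atPos j k) := by
  have hswap := atPos_trans_permC i k (Equiv.swap i j)
  rw [Equiv.swap_apply_left] at hswap
  exact (InVG.iff_of_trans_eq (.perm _) hswap).1 h

/-- Splitting the `j`-th copy turns `g` there into `g|₀ ⊕ g|₁`; if `g|₀ ∈ {1, σ}`, the factor
`g|₀` can be cancelled. -/
lemma InVG.atPos_succ_step {n : ℕ} {j : Fin n} {g : GS} (hg : g ≠ .s)
    (hg₀ : g.step false = .e ∨ g.step false = .s) (h : InVG (atPos j g.toC1)) :
    InVG (atPos j.succ (g.step true).toC1) := by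
  have hsplit := (InVG.iff_of_trans_eq (.split j) (atPos_trans_splitAt j hg)).1 h
  refine ((vgSubgroup _).mul_mem_cancel_left ?_).1 hsplit
  rcases hg₀ with h₀ | h₀ <;> rw [h₀]
  · rw [GS.toC1_e, atPos_one]
    exact (vgSubgroup _).one_mem
  · exact InVG.atPos_s _

lemma toC1_mem_Grig {g : GS} (hg : g ≠ .s) : g.toC1 ∈ Grig := by
  cases g
  · exact GS.toC1_e ▸ Grig.one_mem
  · exact absurd rfl hg
  all_goals exact Subgroup.subset_closure (by simp [gb, gc, gd, GS.toC1])

lemma InVG.atPos_toC1 : ∀ {n : ℕ} (j : Fin n) {g : GS}, g ≠ .s → InVG (atPos j g.toC1)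
  | 1, j, g, hg => by
    rw [atPos_fin_one]
    exact .grig (toC1_mem_Grig hg)
  | n + 2, j, g, hg => by
    have step (g : GS) (hg : g ≠ .s) (hg₀ : g.step false = .e ∨ g.step false = .s) :=
      (InVG.atPos_succ_step hg hg₀ (InVG.atPos_toC1 (0 : Fin (n + 1)) hg)).atPos_of_atPos j
    cases g
    · rw [GS.toC1_e, atPos_one]
      exact (vgSubgroup _).one_mem
    · exact absurd rfl hg
    · exact step .d (by decide) (by decide)
    · exact step .b (by decide) (by decide)
    · exact step .c (by decide) (by decide)

lemma InVG.of_mem_Kn {n : ℕ} {h : C n ≃ₜ C n} (hh : h ∈ Kn n) : InVG h := by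
  obtain ⟨α, k, hk, rfl⟩ := mem_Kn_iff.1 hh
  have hk' : k ∈ (vgSubgroup n).comap (dsumHom n) := by
    refine Subgroup.pi_mem_of_mulSingle_mem k fun i => ?_
    obtain ⟨g, hg, hgk⟩ := mem_Kset_iff.1 (hk i)
    rw [← hgk]
    exact InVG.atPos_toC1 i hg
  exact (vgSubgroup n).mul_mem (.perm α) hk'

lemma Homeomorph.trans_eq_iff_eq_trans_symm {X Y Z : Type*} [TopologicalSpace X]
    [TopologicalSpace Y] [TopologicalSpace Z] {g : X ≃ₜ Y} {f : Y ≃ₜ Z} {h : X ≃ₜ Z} :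
    g.trans f = h ↔ g = h.trans f.symm := by
  constructor <;> rintro rfl <;> ext <;> simp

lemma Homeomorph.conj_injective {X Y : Type*} [TopologicalSpace X] [TopologicalSpace Y]
    (f : X ≃ₜ Y) : Function.Injective fun k : Y ≃ₜ Y => (f.trans k).trans f.symm := by
  intro k k' h
  ext y : 1
  simpa using DFunLike.congr_fun h (f.symm y)

lemma coset_eq_coset_iff {n : ℕ} {f f' : C 1 ≃ₜ C n} :
    coset f' = coset f ↔ ∃ k ∈ Kn n, f' = f.trans k := by
  constructor
  · intro h
    have hf' : f' ∈ coset f' := ⟨1, (knSubgroup n).one_mem, rfl⟩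
    rwa [h] at hf'
  · rintro ⟨k, hk, rfl⟩
    ext h
    constructor
    · rintro ⟨k', hk', rfl⟩
      exact ⟨k' * k, (knSubgroup n).mul_mem hk' hk, rfl⟩
    · rintro ⟨k', hk', rfl⟩
      refine ⟨k' * k⁻¹, (knSubgroup n).mul_mem hk' ((knSubgroup n).inv_mem hk), ?_⟩
      ext x : 1
      simp

lemma mem_stabilizer_iff {n : ℕ} {f : C 1 ≃ₜ C n} (hf : InVG f) {g : C 1 ≃ₜ C 1} :
    InVG g ∧ coset (g.trans f) = coset f ↔ ∃ k ∈ Kn n, g = (f.trans k).trans f.symm := by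
  simp_rw [coset_eq_coset_iff, Homeomorph.trans_eq_iff_eq_trans_symm]
  refine ⟨And.right, ?_⟩
  rintro ⟨k, hk, rfl⟩
  exact ⟨(hf.comp (InVG.of_mem_Kn hk)).comp hf.inv, k, hk, rfl⟩

def knParam (n : ℕ) (p : Equiv.Perm (Fin n) × (Fin n → {g : GS // g ≠ .s})) : C n ≃ₜ C n :=
  permC p.1 * dsumFam fun i => (p.2 i).1.toC1

lemma knParam_apply {n : ℕ} (p : Equiv.Perm (Fin n) × (Fin n → {g : GS // g ≠ .s}))
    (i : Fin n) (w : Δ) : knParam n p (i, w) = (p.1 i, (p.2 i).1.act w) := by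
  simp [knParam, dsumFam_apply]

lemma range_knParam (n : ℕ) : Set.range (knParam n) = Kn n := by
  ext h
  constructor
  · rintro ⟨p, rfl⟩
    exact ⟨p.1, _, fun i => mem_Kset_iff.2 ⟨_, (p.2 i).2, rfl⟩, rfl⟩
  · intro hh
    obtain ⟨α, k, hk, rfl⟩ := mem_Kn_iff.1 hh
    choose g hg hgk using fun i => mem_Kset_iff.1 (hk i)
    exact ⟨(α, fun i => ⟨g i, hg i⟩), by simp only [knParam, hgk]⟩

lemma knParam_injective (n : ℕ) : Function.Injective (knParam n) := by
  intro p q h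
  have hpq (i : Fin n) (w : Δ) := DFunLike.congr_fun h (i, w)
  simp only [knParam_apply, Prod.mk.injEq] at hpq
  refine Prod.ext (Equiv.ext fun i => (hpq i fun _ => false).1) (funext fun i => ?_)
  exact Subtype.ext <| GS.toC1_injOn (p.2 i).2 (q.2 i).2 <| ext_act1 fun w => (hpq i w).2

theorem vertex_stabilizer (n : ℕ) (f : C 1 ≃ₜ C n) (hf : InVG f) :
    ({g : C 1 ≃ₜ C 1 | InVG g ∧ coset (g.trans f) = coset f}
      = {g : C 1 ≃ₜ C 1 | ∃ k ∈ Kn n, g = (f.trans k).trans f.symm}) ∧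
    Set.Finite {g : C 1 ≃ₜ C 1 | ∃ k ∈ Kn n, g = (f.trans k).trans f.symm} ∧
    Set.ncard {g : C 1 ≃ₜ C 1 | ∃ k ∈ Kn n, g = (f.trans k).trans f.symm}
      = n.factorial * 4 ^ n := by
  have hrange : {g : C 1 ≃ₜ C 1 | ∃ k ∈ Kn n, g = (f.trans k).trans f.symm}
      = Set.range ((fun k => (f.trans k).trans f.symm) ∘ knParam n) := by
    rw [Set.range_comp, range_knParam]
    ext g
    simp [eq_comm]
  refine ⟨Set.ext fun g => mem_stabilizer_iff hf, hrange ▸ Set.finite_range _, ?_⟩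
  rw [hrange, Set.ncard_range_of_injective (f.conj_injective.comp (knParam_injective n)),
    Nat.card_prod, Nat.card_perm, Nat.card_fun, GS.card_subtype_ne_s, Nat.card_eq_fintype_card,
    Fintype.card_fin]
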